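/- Let A be a real symmetric positive semidefinite d×d matrix with eigenvalues λ_1 ≥ λ_2 ≥ ... ≥ λ_d satisfying λ_1 − λ_2 ≥ G for some G > 0, and let c ∈ (0, 1/32). Then for every unit vector w ∈ ℝ^d, with λ = wᵀAw, at least one of the following holds: (i) ‖(λ I − A) w‖ ≥ cG; (ii) there exists a nonzero v with ⟨v, w⟩ = 0 and ⟨v, (λ I − A) v⟩ ≤ −6cG ‖v‖²; (iii) there exists a unit eigenvector u of A with eigenvalue λ_1 such that 2‖(λ I − A) w‖²/G ≥ (1/2)λ_1 − (1/2) wᵀ A w ≥ (G/4) ‖w − u‖². -/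
import Mathlib


open scoped RealInnerProductSpace

set_option maxHeartbeats 4000000 in
/-- **PCA objective is strict saddle.** Let `T` be a symmetric positive
semidefinite operator on `ℝ^d` with orthonormal eigenvectors `u i` and eigenvalues
`lam i` in nonincreasing order satisfying the eigengap `lam 0 − lam 1 ≥ G > 0`, and
let `c ∈ (0, 1/32)`. Then for every unit vector `w`, with `λ = ⟨w, T w⟩`, either
(i) the Lagrangian gradient `(λI − T)w` has norm at least `cG`; or (ii) there is a
nonzero tangent direction `v ⊥ w` with curvature `⟨v, (λI − T)v⟩ ≤ −6cG‖v‖²`; or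
(iii) there is a unit top eigenvector `u'` with
`2‖(λI − T)w‖²/G ≥ (1/2)·lam 0 − (1/2)λ ≥ (G/4)‖w − u'‖²`. -/
theorem stmt_15 {d : ℕ} (hd : 2 ≤ d)
    (T : EuclideanSpace ℝ (Fin d) →ₗ[ℝ] EuclideanSpace ℝ (Fin d))
    (hT : T.IsSymmetric)
    (hpsd : ∀ v : EuclideanSpace ℝ (Fin d), 0 ≤ ⟪v, T v⟫)
    (u : Fin d → EuclideanSpace ℝ (Fin d)) (hu : Orthonormal ℝ u)
    (lam : Fin d → ℝ) (heig : ∀ i, T (u i) = lam i • u i) (hmono : Antitone lam)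
    (G : ℝ) (hG : 0 < G)
    (hgap : lam ⟨0, by omega⟩ - lam ⟨1, by omega⟩ ≥ G)
    (c : ℝ) (hc : 0 < c) (hc' : c < 1 / 32)
    (w : EuclideanSpace ℝ (Fin d)) (hw : ‖w‖ = 1) :
    ‖⟪w, T w⟫ • w - T w‖ ≥ c * G ∨
    (∃ v : EuclideanSpace ℝ (Fin d), v ≠ 0 ∧ ⟪v, w⟫ = 0 ∧
      ⟪v, ⟪w, T w⟫ • v - T v⟫ ≤ -(6 * c * G) * ‖v‖ ^ 2) ∨
    (∃ u' : EuclideanSpace ℝ (Fin d), ‖u'‖ = 1 ∧ T u' = lam ⟨0, by omega⟩ • u' ∧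
      2 * ‖⟪w, T w⟫ • w - T w‖ ^ 2 / G ≥
        (1 / 2) * lam ⟨0, by omega⟩ - (1 / 2) * ⟪w, T w⟫ ∧
      (1 / 2) * lam ⟨0, by omega⟩ - (1 / 2) * ⟪w, T w⟫ ≥
        (G / 4) * ‖w - u'‖ ^ 2) := by
  classical
  have h0d : 0 < d := by omega
  have h1d : 1 < d := by omega
  set i0 : Fin d := ⟨0, h0d⟩ with hi0def
  set i1 : Fin d := ⟨1, h1d⟩ with hi1def
  haveI : Nonempty (Fin d) := ⟨i0⟩
  have hcard : Fintype.card (Fin d) = Module.finrank ℝ (EuclideanSpace ℝ (Fin d)) := by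
    simp
  let bB := basisOfOrthonormalOfCardEqFinrank hu hcard
  have hbB : ⇑bB = u := coe_basisOfOrthonormalOfCardEqFinrank hu hcard
  have hu' : Orthonormal ℝ ⇑bB := hbB ▸ hu
  let b : OrthonormalBasis (Fin d) ℝ (EuclideanSpace ℝ (Fin d)) := bB.toOrthonormalBasis hu'
  have hb : ∀ i, b i = u i := by
    intro i
    have : ⇑b = ⇑bB := bB.coe_toOrthonormalBasis hu'
    rw [this, hbB]
  set lw : ℝ := ⟪w, T w⟫ with hlwdef
  set a : Fin d → ℝ := fun i => ⟪u i, w⟫ with hadef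
  have hwinner : ∀ i, ⟪w, u i⟫ = a i := fun i => (real_inner_comm (u i) w)
  have hww : ⟪w, w⟫ = (1:ℝ) := by
    rw [real_inner_self_eq_norm_sq, hw]; norm_num
  have hsum : ∑ i, a i ^ 2 = 1 := by
    have h := b.sum_inner_mul_inner w w
    simp only [hb, hwinner, hww] at h
    rw [← h]
    exact Finset.sum_congr rfl fun i _ => by rw [real_inner_comm]; simp [hwinner, sq]
  have hTu : ∀ i, ⟪u i, T w⟫ = lam i * a i := fun i => by
    rw [← hT (u i) w, heig i, real_inner_smul_left]
  have hlam_eq : lw = ∑ i, lam i * a i ^ 2 := by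
    have h := b.sum_inner_mul_inner w (T w)
    simp only [hb, hwinner, hTu] at h
    rw [hlwdef, ← h]
    exact Finset.sum_congr rfl fun i _ => by ring
  set g : EuclideanSpace ℝ (Fin d) := lw • w - T w with hgdef
  have hginner : ∀ i, ⟪u i, g⟫ = (lw - lam i) * a i := fun i => by
    rw [hgdef, inner_sub_right, real_inner_smul_right, hTu, hadef]; ring
  have hgsq : ‖g‖ ^ 2 = ∑ i, ((lw - lam i) * a i) ^ 2 := by
    have h := b.sum_inner_mul_inner g g
    simp only [hb] at h
    rw [← real_inner_self_eq_norm_sq, ← h]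
    exact Finset.sum_congr rfl fun i _ => by
      rw [real_inner_comm, hginner]; ring
  -- abbreviations
  set μ : ℝ := lam i0 with hμ
  set ν : ℝ := lam i1 with hν
  set aa : ℝ := a i0 with haa
  set S : Finset (Fin d) := Finset.univ.erase i0 with hS
  have hsplit : ∀ f : Fin d → ℝ, ∑ i ∈ S, f i + f i0 = ∑ i, f i := fun f =>
    Finset.sum_erase_add Finset.univ f (Finset.mem_univ i0)
  have hSnn : (0:ℝ) ≤ ∑ i ∈ S, a i ^ 2 := Finset.sum_nonneg fun i _ => sq_nonneg _
  have hS1 : ∑ i ∈ S, a i ^ 2 = 1 - aa ^ 2 := by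
    have := hsplit (fun i => a i ^ 2); linarith [hsum ▸ this]
  have haa1 : aa ^ 2 ≤ 1 := by nlinarith
  have hlamS : lw = μ * aa ^ 2 + ∑ i ∈ S, lam i * a i ^ 2 := by
    have := hsplit (fun i => lam i * a i ^ 2); rw [hlam_eq]; linarith
  have hlt_ν : ∀ i ∈ S, lam i ≤ ν := by
    intro i hi
    have hne : (i:ℕ) ≠ 0 := fun h => (Finset.ne_of_mem_erase hi) (Fin.ext h)
    apply hmono
    rw [Fin.le_def]
    show 1 ≤ (i:ℕ)
    omega
  have hle_μ : ∀ i, lam i ≤ μ := fun i => hmono (by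
    rw [Fin.le_def]; exact Nat.zero_le _)
  have hgapG : μ - ν ≥ G := hgap
  -- upper bound on lw
  have hub : lw ≤ μ * aa ^ 2 + ν * (1 - aa ^ 2) := by
    rw [hlamS]
    have : ∑ i ∈ S, lam i * a i ^ 2 ≤ ∑ i ∈ S, ν * a i ^ 2 :=
      Finset.sum_le_sum fun i hi => mul_le_mul_of_nonneg_right (hlt_ν i hi) (sq_nonneg _)
    have h2 : ∑ i ∈ S, ν * a i ^ 2 = ν * (1 - aa ^ 2) := by rw [← Finset.mul_sum, hS1]
    linarith
  have hs_lb : μ - lw ≥ (1 - aa ^ 2) * G := by nlinarith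
  have hs_nonneg : 0 ≤ μ - lw := by nlinarith [sq_nonneg aa]
  -- gradient lower bound via top coordinate
  have hg_top : ‖g‖ ≥ (μ - lw) * |aa| := by
    have h1 : |⟪u i0, g⟫| ≤ ‖u i0‖ * ‖g‖ := abs_real_inner_le_norm _ _
    rw [hginner i0, hu.1 i0, one_mul, abs_mul, abs_of_nonpos (by linarith : lw - μ ≤ 0)] at h1
    calc (μ - lw) * |aa| = -(lw - μ) * |a i0| := by rw [haa]; ring
    _ ≤ ‖g‖ := h1
  -- Cauchy-Schwarz key bound
  have hkey : ((μ - lw) * aa ^ 2) ^ 2 ≤ ‖g‖ ^ 2 * (1 - aa ^ 2) := by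
    have hsa : ∑ i ∈ S, ((lw - lam i) * a i) * a i = (μ - lw) * aa ^ 2 := by
      have h1 : ∑ i ∈ S, ((lw - lam i) * a i) * a i
          = lw * (∑ i ∈ S, a i ^ 2) - ∑ i ∈ S, lam i * a i ^ 2 := by
        rw [Finset.mul_sum, ← Finset.sum_sub_distrib]
        exact Finset.sum_congr rfl fun i _ => by ring
      rw [h1, hS1]; linear_combination hlamS
    have hcs := Finset.sum_mul_sq_le_sq_mul_sq S (fun i => (lw - lam i) * a i) a
    rw [hsa] at hcs
    have h2 : ∑ i ∈ S, ((lw - lam i) * a i) ^ 2 ≤ ‖g‖ ^ 2 := by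
      rw [hgsq]
      exact Finset.sum_le_sum_of_subset_of_nonneg (Finset.subset_univ S)
        (fun i _ _ => sq_nonneg _)
    have h3 : ∑ i ∈ S, a i ^ 2 ≤ 1 - aa ^ 2 := le_of_eq hS1
    calc ((μ - lw) * aa ^ 2) ^ 2 ≤ (∑ i ∈ S, ((lw - lam i) * a i) ^ 2) * ∑ i ∈ S, a i ^ 2 := hcs
      _ ≤ ‖g‖ ^ 2 * (1 - aa ^ 2) := by
          apply mul_le_mul h2 h3 hSnn (sq_nonneg _)
  have hai : ∀ i, ⟪u i, w⟫ = a i := fun _ => rfl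
  have hwT : ⟪w, T w⟫ = lw := hlwdef.symm
  clear_value lw a g μ ν aa S
  clear hb b hu' hbB bB hcard hpsd hmono hsplit
  by_cases hcase1 : (1:ℝ)/2 ≤ aa ^ 2
  · -- near optimum: case (iii)
    right; right
    have habs_le : |aa| ≤ 1 := by nlinarith [sq_abs aa, abs_nonneg aa]
    refine ⟨if 0 ≤ aa then u i0 else -u i0, ?_, ?_, ?_, ?_⟩
    · split <;> simp [hu.1 i0]
    · split <;> simp [heig i0, smul_neg, hμ]
    · -- 2‖g‖²/G ≥ s/2
      rw [ge_iff_le, le_div_iff₀ hG]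
      rcases eq_or_lt_of_le hs_nonneg with h | h
      · nlinarith [sq_nonneg ‖g‖]
      · have haa4 : (1:ℝ)/4 ≤ (aa^2)^2 := by nlinarith
        have e1 : (μ - lw)^2 / 4 ≤ ‖g‖^2 * (1 - aa^2) :=
          le_trans (by nlinarith [sq_nonneg (μ - lw),
            mul_le_mul_of_nonneg_left haa4 (sq_nonneg (μ - lw))]) hkey
        have e2 : ‖g‖^2 * ((1 - aa^2) * G) ≤ ‖g‖^2 * (μ - lw) :=
          mul_le_mul_of_nonneg_left hs_lb (sq_nonneg ‖g‖)
        nlinarith [mul_le_mul_of_nonneg_right e1 hG.le, e2, h, hG, sq_nonneg ‖g‖]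
    · -- s/2 ≥ (G/4)‖w-u'‖²
      have hwu' : ⟪w, (if 0 ≤ aa then u i0 else -u i0 : EuclideanSpace ℝ (Fin d))⟫ = |aa| := by
        split
        · rw [hwinner i0, ← haa]
          exact (abs_of_nonneg (by assumption)).symm
        · rw [inner_neg_right, hwinner i0, ← haa]
          exact (abs_of_neg (lt_of_not_ge (by assumption))).symm
      have hnorm' : ‖(if 0 ≤ aa then u i0 else -u i0 : EuclideanSpace ℝ (Fin d))‖ = 1 := by
        split <;> simp [hu.1 i0]
      have hdist : ‖w - (if 0 ≤ aa then u i0 else -u i0 : EuclideanSpace ℝ (Fin d))‖ ^ 2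
          = 2 - 2 * |aa| := by
        rw [norm_sub_sq_real, hw, hnorm', hwu']; ring
      rw [hdist]
      nlinarith [hs_lb, sq_abs aa, abs_nonneg aa,
        mul_nonneg (mul_nonneg (sub_nonneg.mpr habs_le) (abs_nonneg aa)) hG.le]
  · push_neg at hcase1
    by_cases hcase2 : (1:ℝ)/4 ≤ aa ^ 2
    · -- large gradient: case (i)
      left
      have habs2 : (1:ℝ)/2 ≤ |aa| := by nlinarith [sq_abs aa, abs_nonneg aa]
      have h2 : G/2 ≤ μ - lw := by nlinarith
      have h3 : G/2 * (1/2) ≤ (μ - lw) * |aa| :=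
        mul_le_mul h2 habs2 (by norm_num) hs_nonneg
      nlinarith [hg_top, hG]
    · -- negative curvature: case (ii)
      push_neg at hcase2
      right; left
      have hv2 : ‖u i0 - aa • w‖ ^ 2 = 1 - aa ^ 2 := by
        rw [norm_sub_sq_real, real_inner_smul_right, norm_smul, hw, hu.1 i0, hai i0, ← haa,
          Real.norm_eq_abs, mul_one, sq_abs]
        ring
      refine ⟨u i0 - aa • w, ?_, ?_, ?_⟩
      · intro h
        rw [h] at hv2
        simp only [norm_zero] at hv2
        nlinarith [hv2]
      · rw [inner_sub_left, real_inner_smul_left, hww, hai i0, ← haa]; ring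
      · have hTv : T (u i0 - aa • w) = lam i0 • u i0 - aa • T w := by
          rw [map_sub, map_smul, heig i0]
        have hcur : ⟪u i0 - aa • w, lw • (u i0 - aa • w) - T (u i0 - aa • w)⟫
            = (lw - μ) * (1 - 2 * aa ^ 2) := by
          rw [hTv]
          simp only [inner_sub_left, inner_sub_right, real_inner_smul_left,
            real_inner_smul_right, hww, hTu i0, hai i0, hwinner i0, hwT]
          rw [real_inner_self_eq_norm_sq, hu.1 i0, ← haa, hμ]
          ring
        rw [hcur, hv2]
        have hpos1 : (0:ℝ) < 1 - aa ^ 2 := by nlinarith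
        have k1 : (1 - aa^2) * G * (1 - 2*aa^2) ≤ (μ - lw) * (1 - 2*aa^2) :=
          mul_le_mul_of_nonneg_right hs_lb (by nlinarith)
        nlinarith [k1, mul_pos (mul_pos hpos1 hG) hpos1, hpos1, hG, hc, hc',
          mul_pos hpos1 hG]
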